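/- Given c¹, c² ∈ ℕ^n and k₁, k₂ ∈ ℕ, consider the directed graph G constructed as follows: nodes are s = v₁¹, v₂¹, …, v_{n+1}¹ = t, nodes v₁², …, v_n², and an extra node v; arcs are (v_i¹, v_i²) with cost (c¹_i, 0), (v_i¹, v_{i+1}¹) with cost (0, c²_i), (v_i², v_{i+1}¹) with cost (0,0) for each 1 ≤ i ≤ n, plus an arc (s,t) with cost (k₁+1, 0) and a path (s,v,t) with total cost (0, Σᵢc²ᵢ − k₂ + 1). Then there exists an s-t-path in G with cost (y₁, y₂) satisfying y₁ ≤ k₁ and y₂ ≤ Σᵢ c²ᵢ − k₂ if and only if there exists x ∈ {0,1}^n with (c¹)^T x ≤ k₁ and (c²)^T x ≥ k₂. -/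

import Mathlib

/-- Vertices of the Knapsack reduction graph: `a i` are the nodes `v_{i+1}¹` (so `a 0 = s`
and `a n = t`), `b i` are the nodes `v_{i+1}²`, and `extra` is the detour node `v`. -/
inductive KPVertex (n : ℕ) where
  | a : Fin (n + 1) → KPVertex n
  | b : Fin n → KPVertex n
  | extra : KPVertex n

/-- The arcs of the Knapsack reduction graph together with their biobjective costs. -/
def KPEdge (n : ℕ) (c1 c2 : Fin n → ℕ) (k1 k2 : ℕ) :
    KPVertex n → KPVertex n → ℕ × ℕ → Prop := fun u w cost =>
  (∃ i : Fin n, u = .a i.castSucc ∧ w = .b i ∧ cost = (c1 i, 0)) ∨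
  (∃ i : Fin n, u = .a i.castSucc ∧ w = .a i.succ ∧ cost = (0, c2 i)) ∨
  (∃ i : Fin n, u = .b i ∧ w = .a i.succ ∧ cost = (0, 0)) ∨
  (u = .a 0 ∧ w = .a (Fin.last n) ∧ cost = (k1 + 1, 0)) ∨
  (u = .a 0 ∧ w = .extra ∧ cost = (0, (∑ i, c2 i) - k2 + 1)) ∨
  (u = .extra ∧ w = .a (Fin.last n) ∧ cost = (0, 0))

/-- `ReachCost E s v y`: there is a path from `s` to `v` in the graph with arc relation `E`
whose total (componentwise summed) cost is `y`. -/
inductive ReachCost {α : Type*} (E : α → α → ℕ × ℕ → Prop) (s : α) : α → ℕ × ℕ → Prop where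
  | base : ReachCost E s s (0, 0)
  | step {u w : α} {y c : ℕ × ℕ} :
      ReachCost E s u y → E u w c → ReachCost E s w (y.1 + c.1, y.2 + c.2)

/-! A path from `s` to `t` that avoids the two shortcut arcs decides, item by item, whether to
take item `i` (via `v_i²`, cost `(c¹ᵢ, 0)`) or to skip it (cost `(0, c²ᵢ)`), so its cost is
`((c¹)ᵀx, (c²)ᵀ(1 - x))` for some `x ∈ {0,1}ⁿ`; and since `(c²)ᵀ(1 - x) = Σᵢc²ᵢ − (c²)ᵀx`, the
bound `Σᵢc²ᵢ − k₂` on it is the bound `k₂` from below on `(c²)ᵀx`. The shortcut arcs exceed one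
of the two budgets by one, so they never yield a feasible path. -/

open Finset

theorem ReachCost.step_add {α : Type*} {E : α → α → ℕ × ℕ → Prop} {s u w : α} {y c : ℕ × ℕ}
    (h : ReachCost E s u y) (e : E u w c) : ReachCost E s w (y + c) :=
  h.step e

theorem Finset.sum_ite_add_sum_ite_not {ι : Type*} [Fintype ι] (x : ι → Bool) (g : ι → ℕ) :
    (∑ i, if x i then g i else 0) + (∑ i, if x i then 0 else g i) = ∑ i, g i := by
  rw [← sum_add_distrib]
  exact sum_congr rfl fun i _ => by cases x i <;> simp

namespace KPEdge

variable {n : ℕ} (c1 c2 : Fin n → ℕ)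

def itemCost (b : Bool) (i : Fin n) : ℕ × ℕ :=
  if b then (c1 i, 0) else (0, c2 i)

/-- The cost of the path from `s` to `v_j¹` that takes exactly the items `i < j` with `x i`. -/
def prefixCost (x : Fin n → Bool) (j : Fin (n + 1)) : ℕ × ℕ :=
  ∑ i with i.castSucc < j, itemCost c1 c2 (x i) i

variable {c1 c2}

@[simp]
theorem prefixCost_zero (x : Fin n → Bool) : prefixCost c1 c2 x 0 = 0 := by
  simp [prefixCost]

theorem prefixCost_succ (x : Fin n → Bool) (i : Fin n) :
    prefixCost c1 c2 x i.succ = prefixCost c1 c2 x i.castSucc + itemCost c1 c2 (x i) i := by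
  have hfilter : univ.filter (fun j : Fin n => j.castSucc < i.succ) =
      insert i (univ.filter fun j : Fin n => j.castSucc < i.castSucc) := by
    ext j
    simp only [mem_filter_univ, mem_insert, Fin.lt_def, Fin.val_castSucc, Fin.val_succ,
      Fin.ext_iff]
    omega
  rw [prefixCost, hfilter, sum_insert (by simp), add_comm, prefixCost]

theorem prefixCost_congr {x x' : Fin n → Bool} {j : Fin (n + 1)}
    (h : ∀ i : Fin n, i.castSucc < j → x i = x' i) :
    prefixCost c1 c2 x j = prefixCost c1 c2 x' j :=
  sum_congr rfl fun i hi => by rw [h i ((mem_filter_univ i).mp hi)]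

theorem prefixCost_update_succ (x : Fin n → Bool) (i : Fin n) (b : Bool) :
    prefixCost c1 c2 (Function.update x i b) i.succ =
      prefixCost c1 c2 x i.castSucc + itemCost c1 c2 b i := by
  rw [prefixCost_succ, Function.update_self, prefixCost_congr fun j hj =>
    Function.update_of_ne (Fin.castSucc_lt_castSucc_iff.mp hj).ne b x]

theorem prefixCost_last (x : Fin n → Bool) :
    prefixCost c1 c2 x (Fin.last n) =
      (∑ i, if x i then c1 i else 0, ∑ i, if x i then 0 else c2 i) := by
  simp [prefixCost, itemCost, Fin.castSucc_lt_last, Prod.ext_iff, Prod.fst_sum, Prod.snd_sum,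
    apply_ite Prod.fst, apply_ite Prod.snd]

variable (c1 c2)

theorem reachCost_prefixCost (k1 k2 : ℕ) (x : Fin n → Bool) (j : Fin (n + 1)) :
    ReachCost (KPEdge n c1 c2 k1 k2) (.a 0) (.a j) (prefixCost c1 c2 x j) := by
  induction j using Fin.induction with
  | zero =>
    rw [prefixCost_zero]
    exact ReachCost.base
  | succ i ih =>
    rw [prefixCost_succ]
    cases x i <;> simp only [itemCost, Bool.false_eq_true, ↓reduceIte]
    · exact ih.step_add (Or.inr (Or.inl ⟨i, rfl, rfl, rfl⟩))
    · have hvia_b := (ih.step_add (Or.inl ⟨i, rfl, rfl, rfl⟩)).step_add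
        (Or.inr (Or.inr (Or.inl ⟨i, rfl, rfl, rfl⟩)))
      simpa only [Prod.mk_zero_zero, add_zero] using hvia_b

/-- On the item chain a path costs a `prefixCost`; a path through a shortcut arc ends at `t`
over budget. -/
def PathInvariant (k1 k2 : ℕ) : KPVertex n → ℕ × ℕ → Prop
  | .a j, y => (∃ x, y = prefixCost c1 c2 x j) ∨
      (j = Fin.last n ∧ (k1 < y.1 ∨ (∑ i, c2 i) - k2 < y.2))
  | .b i, y => ∃ x, x i = true ∧ y = prefixCost c1 c2 x i.succ
  | .extra, y => (∑ i, c2 i) - k2 < y.2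

variable {c1 c2}

theorem pathInvariant_of_reachCost {k1 k2 : ℕ} {v : KPVertex n} {y : ℕ × ℕ}
    (h : ReachCost (KPEdge n c1 c2 k1 k2) (.a 0) v y) : PathInvariant c1 c2 k1 k2 v y := by
  induction h with
  | base => exact Or.inl ⟨fun _ => false, by simp⟩
  | @step u w y c _ e ih =>
    have hprefix : ∀ {i : Fin n}, PathInvariant c1 c2 k1 k2 (.a i.castSucc) y →
        ∃ x, y = prefixCost c1 c2 x i.castSucc := fun {i} ih =>
      ih.resolve_right fun ⟨hlast, _⟩ => Fin.castSucc_ne_last i hlast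
    rcases e with ⟨i, rfl, rfl, rfl⟩ | ⟨i, rfl, rfl, rfl⟩ | ⟨i, rfl, rfl, rfl⟩ |
      ⟨rfl, rfl, rfl⟩ | ⟨rfl, rfl, rfl⟩ | ⟨rfl, rfl, rfl⟩
    · obtain ⟨x, rfl⟩ := hprefix ih
      exact ⟨Function.update x i true, by simp, (prefixCost_update_succ x i true).symm⟩
    · obtain ⟨x, rfl⟩ := hprefix ih
      exact Or.inl ⟨Function.update x i false, (prefixCost_update_succ x i false).symm⟩
    · obtain ⟨x, -, rfl⟩ := ih
      exact Or.inl ⟨x, rfl⟩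
    · exact Or.inr ⟨rfl, Or.inl (by dsimp only; omega)⟩
    · change _ < y.2 + _
      omega
    · exact Or.inr ⟨rfl, Or.inr ih⟩

end KPEdge

theorem stmt_3_general (n k1 k2 : ℕ) (c1 c2 : Fin n → ℕ)
    (h2 : k2 < ∑ i, c2 i) :
    (∃ y : ℕ × ℕ,
      ReachCost (KPEdge n c1 c2 k1 k2) (.a 0) (.a (Fin.last n)) y ∧
      y.1 ≤ k1 ∧ y.2 ≤ (∑ i, c2 i) - k2) ↔
    (∃ x : Fin n → Bool,
      (∑ i, if x i then c1 i else 0) ≤ k1 ∧ k2 ≤ ∑ i, if x i then c2 i else 0) := by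
  constructor
  · rintro ⟨y, hy, hy1, hy2⟩
    rcases KPEdge.pathInvariant_of_reachCost hy with ⟨x, rfl⟩ | ⟨-, hover⟩
    · rw [KPEdge.prefixCost_last] at hy1 hy2
      have hsplit := sum_ite_add_sum_ite_not x c2
      exact ⟨x, hy1, by omega⟩
    · omega
  · rintro ⟨x, hx1, hx2⟩
    refine ⟨_, KPEdge.reachCost_prefixCost c1 c2 k1 k2 x (Fin.last n), ?_⟩
    have hsplit := sum_ite_add_sum_ite_not x c2
    rw [KPEdge.prefixCost_last]
    exact ⟨hx1, by omega⟩

/-- There is an `s`-`t`-path of cost `(y₁,y₂)` with `y₁ ≤ k₁` and `y₂ ≤ Σᵢc²ᵢ − k₂` in the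
reduction graph iff there is `x ∈ {0,1}ⁿ` with `(c¹)ᵀx ≤ k₁` and `(c²)ᵀx ≥ k₂`. -/
theorem stmt_3 (n k1 k2 : ℕ) (c1 c2 : Fin n → ℕ)
    (hc1 : ∀ i, 0 < c1 i) (hc2 : ∀ i, 0 < c2 i)
    (h1 : k1 < ∑ i, c1 i) (h2 : k2 < ∑ i, c2 i) :
    (∃ y : ℕ × ℕ,
      ReachCost (KPEdge n c1 c2 k1 k2) (.a 0) (.a (Fin.last n)) y ∧
      y.1 ≤ k1 ∧ y.2 ≤ (∑ i, c2 i) - k2) ↔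
    (∃ x : Fin n → Bool,
      (∑ i, if x i then c1 i else 0) ≤ k1 ∧ k2 ≤ ∑ i, if x i then c2 i else 0) :=
  stmt_3_general n k1 k2 c1 c2 h2
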